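/- Let $k$ be a finite field with $q$ elements, and let $\chi$ and $\eta$ be nontrivial multiplicative characters of $k^\times$ with values in $\mathbb{C}$ (extended by $\chi(0)=\eta(0)=0$). Define $g(\chi,\eta;k)=\sum_{u\in k}\sum_{v\in k}\chi(u)\overline{\chi}(u+1)\overline{\chi}(v)\chi(v+1)\eta(uv-1)$. Then $g(\chi,\eta;k)=\frac{\eta(-1)}{q-1}\sum_{\rho} J(\rho,\eta)\,J(\rho,\overline{\chi})\,J(\rho,\chi)$, where the sum runs over all multiplicative characters $\rho$ of $k^\times$ (including the trivial one) and $J$ denotes the Jacobi sum. -/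

import Mathlib

/-!
Expanding the product of the three Jacobi sums and summing over `ρ` with the orthogonality
relation `∑_ρ ρ x = (q - 1) [x = 1]` leaves
`(q - 1) ∑_{bc ≠ 0} η(1 - (bc)⁻¹) χ̄(1 - b) χ(1 - c)`.
The involution `x ↦ -x⁻¹` of `k` turns this into `g(χ,η;k)` term by term: with `b = -u⁻¹`,
`c = -v⁻¹` one has `1 - b = (u + 1)/u`, `1 - (bc)⁻¹ = -(uv - 1)`, and `χ̄ x = χ x⁻¹`.
-/

attribute [local instance] Fintype.ofFinite

open Finset

theorem MulChar.sum_apply_eq_ite {M R : Type*} [CommMonoid M] [Finite M] [CommRing R]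
    [IsDomain R] [HasEnoughRootsOfUnity R (Monoid.exponent Mˣ)] [DecidableEq M] (a : M) :
    ∑ χ : MulChar M R, χ a = if a = 1 then (Nat.card Mˣ : R) else 0 := by
  split_ifs with ha
  · simp [ha, ← Nat.card_eq_fintype_card, card_eq_card_units_of_hasEnoughRootsOfUnity]
  · obtain ⟨χ, hχ⟩ := exists_apply_ne_one_of_hasEnoughRootsOfUnity M R ha
    refine eq_zero_of_mul_eq_self_left hχ ?_
    simp only [mul_sum, ← mul_apply]
    exact Fintype.sum_bijective _ (Group.mulLeft_bijective χ) _ _ fun _ ↦ rfl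

section FiniteField

variable {k : Type*} [Field k] [Fintype k]

theorem MulChar.conj_apply (χ : MulChar k ℂ) (x : k) : starRingEnd ℂ (χ x) = χ x⁻¹ :=
  (star_apply' χ x).trans (inv_apply' χ x)

theorem Fintype.sum_neg_inv {M : Type*} [AddCommMonoid M] (F : k → M) :
    ∑ x, F (-x⁻¹) = ∑ x, F x :=
  Fintype.sum_bijective _ (Function.Involutive.bijective fun x ↦ by simp) _ _ fun _ ↦ rfl

theorem Fintype.sum_ite_mul_eq_one [DecidableEq k] {M : Type*} [AddCommMonoid M] (F : k → M)
    (x : k) : ∑ a, (if a * x = 1 then F a else 0) = if x = 0 then 0 else F x⁻¹ := by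
  split_ifs with hx
  · simp [hx]
  · simp [mul_eq_one_iff_eq_inv₀ hx]

theorem MulChar.sum_mul_sum_mul_sum_eq {R : Type*} [CommRing R] [IsDomain R]
    [HasEnoughRootsOfUnity R (Monoid.exponent kˣ)] [DecidableEq k] (f g h : k → R) :
    ∑ ρ : MulChar k R, (∑ a, ρ a * f a) * (∑ b, ρ b * g b) * (∑ c, ρ c * h c)
      = Nat.card kˣ * ∑ b, ∑ c, if b * c = 0 then 0 else f (b * c)⁻¹ * g b * h c := by
  have expand (ρ : MulChar k R) : (∑ a, ρ a * f a) * (∑ b, ρ b * g b) * (∑ c, ρ c * h c)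
      = ∑ a, ∑ b, ∑ c, ρ (a * (b * c)) * (f a * g b * h c) := by
    rw [sum_mul_sum, sum_mul]
    refine sum_congr rfl fun a _ ↦ ?_
    rw [sum_mul_sum]
    exact sum_congr rfl fun b _ ↦ sum_congr rfl fun c _ ↦ by rw [map_mul, map_mul]; ring
  have collapse (b c : k) : ∑ a, ∑ ρ : MulChar k R, ρ (a * (b * c)) * (f a * g b * h c)
      = Nat.card kˣ * if b * c = 0 then 0 else f (b * c)⁻¹ * g b * h c := by
    simp only [← sum_mul, sum_apply_eq_ite, ite_mul, zero_mul]
    rw [Fintype.sum_ite_mul_eq_one (fun a ↦ _ * (f a * g b * h c))]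
    split_ifs <;> simp [mul_assoc]
  rw [sum_congr rfl fun ρ _ ↦ expand ρ]
  simp_rw [sum_comm (s := (univ : Finset (MulChar k R)))]
  rw [sum_comm]
  simp only [mul_sum, ← collapse]
  exact sum_congr rfl fun b _ ↦ sum_comm

theorem conreyIwaniec_summand_eq [DecidableEq k] (χ η : MulChar k ℂ) (u v : k) :
    χ u * starRingEnd ℂ (χ (u + 1)) * starRingEnd ℂ (χ v) * χ (v + 1) * η (u * v - 1)
      = η (-1) * if -u⁻¹ * -v⁻¹ = 0 then 0
          else η (1 - (-u⁻¹ * -v⁻¹)⁻¹) * starRingEnd ℂ (χ (1 - -u⁻¹)) * χ (1 - -v⁻¹) := by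
  rcases eq_or_ne u 0 with rfl | hu
  · simp [MulChar.map_zero]
  rcases eq_or_ne v 0 with rfl | hv
  · simp [MulChar.map_zero]
  have hu' : 1 - -u⁻¹ = (u + 1) * u⁻¹ := by field_simp; ring
  have hv' : 1 - -v⁻¹ = (v + 1) * v⁻¹ := by field_simp; ring
  have huv : u * v - 1 = -1 * (1 - u * v) := by ring
  rw [neg_mul_neg, ← mul_inv, inv_inv, if_neg (by simp [hu, hv]), hu', hv', huv]
  simp only [map_mul, MulChar.conj_apply, inv_inv]
  ring

end FiniteField

open Finset in
theorem conrey_iwaniec_sum_eq_jacobiSum_avg_general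
    (k : Type*) [Field k] [Fintype k] (q : ℕ) (hq : Fintype.card k = q)
    (χ η : MulChar k ℂ) :
    ∑ u : k, ∑ v : k,
        χ u * (starRingEnd ℂ) (χ (u + 1)) * (starRingEnd ℂ) (χ v) * χ (v + 1)
          * η (u * v - 1)
      = η (-1) / ((q : ℂ) - 1) *
          ∑ ρ : MulChar k ℂ,
            (∑ α : k, ρ α * η (1 - α)) * (∑ α : k, ρ α * (starRingEnd ℂ) (χ (1 - α)))
              * (∑ α : k, ρ α * χ (1 - α)) := by
  classical
  have hcard : (Nat.card kˣ : ℂ) = q - 1 := by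
    rw [Nat.card_eq_fintype_card, Fintype.card_units, hq,
      Nat.cast_sub (hq ▸ Fintype.card_pos), Nat.cast_one]
  have hq1 : (q : ℂ) - 1 ≠ 0 := hcard ▸ Nat.cast_ne_zero.mpr Nat.card_pos.ne'
  rw [MulChar.sum_mul_sum_mul_sum_eq (fun a ↦ η (1 - a)) (fun b ↦ starRingEnd ℂ (χ (1 - b)))
    (fun c ↦ χ (1 - c)), hcard, ← mul_assoc, div_mul_cancel₀ _ hq1, mul_sum]
  refine Eq.trans ?_ (Fintype.sum_neg_inv _)
  refine sum_congr rfl fun u _ ↦ ?_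
  rw [mul_sum]
  refine Eq.trans ?_ (Fintype.sum_neg_inv _)
  exact sum_congr rfl fun v _ ↦ conreyIwaniec_summand_eq χ η u v

open Finset in
/-- The Conrey–Iwaniec sum as an average of triple products of Jacobi sums:
`g(χ,η;k) = η(-1)/(q-1) ∑_ρ J(ρ,η) J(ρ,χ̄) J(ρ,χ)`, the sum running over all
multiplicative characters `ρ` of `kˣ` (including the trivial one). -/
theorem conrey_iwaniec_sum_eq_jacobiSum_avg
    (k : Type*) [Field k] [Fintype k] (q : ℕ) (hq : Fintype.card k = q)
    (χ η : MulChar k ℂ) (hχ : χ ≠ 1) (hη : η ≠ 1) :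
    ∑ u : k, ∑ v : k,
        χ u * (starRingEnd ℂ) (χ (u + 1)) * (starRingEnd ℂ) (χ v) * χ (v + 1)
          * η (u * v - 1)
      = η (-1) / ((q : ℂ) - 1) *
          ∑ ρ : MulChar k ℂ,
            (∑ α : k, ρ α * η (1 - α)) * (∑ α : k, ρ α * (starRingEnd ℂ) (χ (1 - α)))
              * (∑ α : k, ρ α * χ (1 - α)) :=
  conrey_iwaniec_sum_eq_jacobiSum_avg_general k q hq χ η
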